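/- arXiv:math/0603557 — 6 statements merged into one kernel-verified Lean document; each statement's English description precedes it below -/
import Mathlib

section
/- For an effective divisor D on a smooth projective curve C of genus g ≥ 1 over an algebraically closed field, if the space Ω(D) of global regular differentials ω with (ω) ≥ D has dimension at least g − r for some 0 ≤ r < g, then deg D ≤ 2r. -/
/-- The degree of an effective divisor (a finitely supported `ℕ`-valued function on
the points of the curve). -/
def divDeg {Point : Type*} (D : Point →₀ ℕ) : ℕ := D.sum fun _ n => n

/-- Riemann–Roch data of a smooth projective curve `C` of genus `g` over an
algebraically closed field: for each effective divisor `D`, the dimension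
`dimOmega D` of the space `Ω(D)` of global regular differentials `ω` with
`(ω) ≥ D`, and the dimension `dimL D` of the Riemann–Roch space `L(D)`,
related by the Riemann–Roch theorem, Clifford's bound
`dim L(D) ≤ 1 + deg D/2` (for `0 ≤ deg D ≤ 2g`), and the vanishing of `Ω(D)`
beyond the canonical degree `2g − 2`. -/
structure CurveRRData (Point : Type*) where
  g : ℕ
  dimOmega : (Point →₀ ℕ) → ℕ
  dimL : (Point →₀ ℕ) → ℕ
  riemann_roch : ∀ D : Point →₀ ℕ, dimL D + g = divDeg D + 1 + dimOmega D
  clifford : ∀ D : Point →₀ ℕ, divDeg D ≤ 2 * g → 2 * dimL D ≤ 2 + divDeg D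
  omega_vanish : ∀ D : Point →₀ ℕ, 2 * g - 2 < divDeg D → dimOmega D = 0

/-- on a smooth projective curve of genus `g ≥ 1` over an algebraically
closed field, if `D` is an effective divisor with `dim Ω(D) ≥ g − r` for some
`0 ≤ r < g`, then `deg D ≤ 2r`. -/
theorem stmt_0 {k : Type*} [Field k] [IsAlgClosed k] {Point : Type*}
    (C : CurveRRData Point) (hg : 1 ≤ C.g) (r : ℕ) (hr : r < C.g)
    (D : Point →₀ ℕ) (hD : C.g - r ≤ C.dimOmega D) :
    divDeg D ≤ 2 * r := by
  have h1 := C.riemann_roch D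
  have hd : divDeg D ≤ 2 * C.g - 2 := by
    by_contra h
    have := C.omega_vanish D (by omega)
    omega
  have hc := C.clifford D (by omega)
  omega
end

section
/- Let p be a prime, e ≥ 1 an integer with p > e + 1, and n ≥ 0. Define δ(n) = max{ d ≥ 0 : e·v_p(n+1) + d ≤ e·v_p(n+d+1) }, where v_p is the p-adic valuation. Then δ(n) ≤ e·⌊n/(p−e−1)⌋. In particular, if p > n + e + 1 then δ(n) = 0. -/
/-- `δ(v,n) = max{ d ≥ 0 : e·v_p(n+1) + d ≤ e·v_p(n+d+1) }`, where `e = v(p)` is the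
ramification index and `v_p` the `p`-adic valuation. -/
noncomputable def deltaFn (p e n : ℕ) : ℕ :=
  sSup {d : ℕ | e * padicValNat p (n + 1) + d ≤ e * padicValNat p (n + d + 1)}

lemma key_pow (p : ℕ) (hp : 1 ≤ p) : ∀ d : ℕ, (p - 1) * d + 1 ≤ p ^ d := by
  obtain ⟨q, rfl⟩ : ∃ q, p = q + 1 := ⟨p - 1, by omega⟩
  intro d
  simp only [Nat.add_sub_cancel]
  induction d with
  | zero => simp
  | succ d ih =>
    have h1 : 1 ≤ (q + 1) ^ d := Nat.one_le_pow _ _ (by omega)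
    have h2 : (q + 1) ^ (d + 1) = (q + 1) ^ d + q * (q + 1) ^ d := by ring
    have h3 : q ≤ q * (q + 1) ^ d := Nat.le_mul_of_pos_right _ h1
    have h4 : q * (d + 1) = q * d + q := by ring
    omega

lemma mem_bound (p e n d : ℕ) (hp : p.Prime) (hpe : e + 1 < p)
    (hd : e * padicValNat p (n + 1) + d ≤ e * padicValNat p (n + d + 1)) :
    d ≤ e * (n / (p - e - 1)) := by
  set v := padicValNat p (n + d + 1) with hv
  have hdev : d ≤ e * v := le_trans (Nat.le_add_left d _) hd
  have hpos : 0 < n + d + 1 := by omega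
  have hdvd : p ^ v ∣ n + d + 1 := pow_padicValNat_dvd
  have hle : p ^ v ≤ n + d + 1 := Nat.le_of_dvd hpos hdvd
  have hkey : (p - 1) * v + 1 ≤ p ^ v := key_pow p hp.one_lt.le v
  have h1 : (p - 1) * v + 1 ≤ n + e * v + 1 := by omega
  have hsplit : (p - 1) * v = (p - e - 1) * v + e * v := by
    have : p - 1 = (p - e - 1) + e := by omega
    rw [this, Nat.add_mul]
  have h2 : (p - e - 1) * v ≤ n := by omega
  have h3 : v ≤ n / (p - e - 1) :=
    (Nat.le_div_iff_mul_le (by omega : 0 < p - e - 1)).2 (by rw [Nat.mul_comm]; omega)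
  calc d ≤ e * v := hdev
    _ ≤ e * (n / (p - e - 1)) := Nat.mul_le_mul_left e h3

/-- if `p > e + 1` then `δ(n) ≤ e·⌊n/(p−e−1)⌋`; in particular if
`p > n + e + 1` then `δ(n) = 0`. -/
theorem stmt_3 (p e n : ℕ) (hp : p.Prime) (he : 1 ≤ e) (hpe : e + 1 < p) :
    deltaFn p e n ≤ e * (n / (p - e - 1)) ∧ (n + e + 1 < p → deltaFn p e n = 0) := by
  have hmain : deltaFn p e n ≤ e * (n / (p - e - 1)) := by
    apply csSup_le ⟨0, by simp⟩
    intro d hd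
    exact mem_bound p e n d hp hpe hd
  refine ⟨hmain, fun h => ?_⟩
  have h0 : n / (p - e - 1) = 0 := Nat.div_eq_of_lt (by omega)
  rw [h0, Nat.mul_zero] at hmain
  omega
end

section
/- Let p be a prime, e ≥ 1 with p > e + 1, and δ(n) = max{ d ≥ 0 : e·v_p(n+1) + d ≤ e·v_p(n+d+1) }. Define Δ(s, r) = max{ Σ_{j=1}^{s} δ(m_j) : m_1, …, m_s ≥ 0 with Σ m_j ≤ r }. Then Δ(s, r) ≤ e·⌊r/(p−e−1)⌋; in particular if p > r + e + 1 then Δ(s, r) = 0. -/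
/-- `Δ(s,r) = max{ Σ_{j=1}^s δ(m_j) : m_1,…,m_s ≥ 0, Σ m_j ≤ r }`. -/
noncomputable def DeltaFn (p e s r : ℕ) : ℕ :=
  sSup {t : ℕ | ∃ m : Fin s → ℕ, (∑ j, m j) ≤ r ∧ t = ∑ j, deltaFn p e (m j)}

lemma bernoulli_nat (a k : ℕ) : 1 + a * k ≤ (a + 1) ^ k := by
  induction k with
  | zero => simp
  | succ m ih =>
    have h1 : 1 ≤ (a + 1) ^ m := Nat.one_le_pow _ _ (by omega)
    calc 1 + a * (m + 1) = (1 + a * m) + a := by ring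
      _ ≤ (a + 1) ^ m + a * (a + 1) ^ m := by
          have := Nat.mul_le_mul_left a h1; omega
      _ = (a + 1) ^ m * (a + 1) := by ring
      _ = (a + 1) ^ (m + 1) := by rw [pow_succ]

lemma mem_delta_le (p e n d : ℕ) (hp : p.Prime) (he : 1 ≤ e) (hpe : e + 1 < p)
    (hd : e * padicValNat p (n + 1) + d ≤ e * padicValNat p (n + d + 1)) :
    d ≤ e * (n / (p - e - 1)) := by
  set v := padicValNat p (n + 1) with hv
  set w := padicValNat p (n + d + 1) with hw
  have hvw : v ≤ w := by
    have : e * v ≤ e * w := le_trans (Nat.le_add_right _ d) hd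
    exact Nat.le_of_mul_le_mul_left this he
  set k := w - v with hk
  have hdk : d ≤ e * k := by
    have hh : e * w = e * v + e * k := by
      rw [hk, ← Nat.mul_add, Nat.add_sub_cancel' hvw]
    omega
  -- p^v ≤ n+1, p^w ≤ n+d+1
  have hpv : p ^ v ≤ n + 1 :=
    Nat.le_of_dvd (by omega) (pow_padicValNat_dvd)
  have hpw : p ^ w ≤ n + d + 1 :=
    Nat.le_of_dvd (by omega) (pow_padicValNat_dvd)
  -- Bernoulli: p^k ≥ 1 + (p-1)*k
  have hbern : 1 + (p - 1) * k ≤ p ^ k := by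
    have := bernoulli_nat (p - 1) k
    have hp2 : 2 ≤ p := hp.two_le
    have : p - 1 + 1 = p := by omega
    rwa [this] at ‹1 + (p - 1) * k ≤ (p - 1 + 1) ^ k›
  have hkey : p ^ v + (p - 1) * k ≤ n + d + 1 := by
    have h1 : p ^ v * (1 + (p - 1) * k) ≤ p ^ v * p ^ k :=
      Nat.mul_le_mul_left _ hbern
    have h2 : p ^ v * p ^ k = p ^ w := by
      rw [← pow_add]; congr 1; omega
    have h3 : 1 ≤ p ^ v := Nat.one_le_pow _ _ hp.pos
    calc p ^ v + (p - 1) * k ≤ p ^ v * 1 + p ^ v * ((p - 1) * k) :=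
          Nat.add_le_add (by omega) (Nat.le_mul_of_pos_left _ (by positivity))
      _ = p ^ v * (1 + (p - 1) * k) := by ring
      _ ≤ p ^ w := by rw [← h2]; exact h1
      _ ≤ n + d + 1 := hpw
  -- (p - e - 1) * k ≤ n
  have hkn : (p - e - 1) * k ≤ n := by
    have h1 : (p - 1) * k ≤ n + e * k := by
      have : 1 ≤ p ^ v := Nat.one_le_pow _ _ hp.pos
      omega
    have h2 : (p - e - 1) * k + e * k = (p - 1) * k := by
      rw [← Nat.add_mul]; congr 1; omega
    omega
  have hck : k ≤ n / (p - e - 1) :=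
    (Nat.le_div_iff_mul_le (by omega)).mpr (by rw [Nat.mul_comm]; exact hkn)
  calc d ≤ e * k := hdk
    _ ≤ e * (n / (p - e - 1)) := Nat.mul_le_mul_left _ hck

lemma deltaFn_le (p e n : ℕ) (hp : p.Prime) (he : 1 ≤ e) (hpe : e + 1 < p) :
    deltaFn p e n ≤ e * (n / (p - e - 1)) := by
  apply csSup_le ⟨0, by simp⟩
  intro d hd
  exact mem_delta_le p e n d hp he hpe hd

/-- if `p > e + 1` then `Δ(s,r) ≤ e·⌊r/(p−e−1)⌋`; in particular if
`p > r + e + 1` then `Δ(s,r) = 0`. -/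
theorem stmt_5 (p e s r : ℕ) (hp : p.Prime) (he : 1 ≤ e) (hpe : e + 1 < p) :
    DeltaFn p e s r ≤ e * (r / (p - e - 1)) ∧ (r + e + 1 < p → DeltaFn p e s r = 0) := by
  have hmain : DeltaFn p e s r ≤ e * (r / (p - e - 1)) := by
    have hne : {t : ℕ | ∃ m : Fin s → ℕ, (∑ j, m j) ≤ r ∧ t = ∑ j, deltaFn p e (m j)}.Nonempty :=
      ⟨∑ j : Fin s, deltaFn p e 0, fun _ => 0, by simp, rfl⟩
    apply csSup_le hne
    rintro t ⟨m, hm, rfl⟩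
    have hc : 0 < p - e - 1 := by omega
    calc ∑ j, deltaFn p e (m j) ≤ ∑ j, e * (m j / (p - e - 1)) :=
          Finset.sum_le_sum fun j _ => deltaFn_le p e (m j) hp he hpe
      _ = e * ∑ j, (m j / (p - e - 1)) := by rw [Finset.mul_sum]
      _ ≤ e * ((∑ j, m j) / (p - e - 1)) := by
          apply Nat.mul_le_mul_left
          rw [Nat.le_div_iff_mul_le hc, Finset.sum_mul]
          exact Finset.sum_le_sum fun j _ => Nat.div_mul_le_self _ _
      _ ≤ e * (r / (p - e - 1)) :=
          Nat.mul_le_mul_left _ (Nat.div_le_div_right hm)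
  refine ⟨hmain, fun hr => ?_⟩
  have h0 : r / (p - e - 1) = 0 := Nat.div_eq_of_lt (by omega)
  rw [h0, Nat.mul_zero] at hmain
  omega
end

section
/- Let O be a complete discrete valuation ring with maximal ideal 𝔭, residue characteristic p, and residue field k. Let F(T) = α_0 + α_1 T + α_2 T² + ⋯ ∈ O[[T]] with v(α_0) > 0, and suppose the m-th compositional iterate of F equals the identity power series T, where m is coprime to p. If the reduction of α_1 in k equals 1 and F(T) ≠ T, then a contradiction follows; i.e., if α_1 ≡ 1 mod 𝔭 and F^{∘m}(T) = T with gcd(m,p) = 1, then F(T) = T. -/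
/-!
Comparing the coefficients of `1` and `X` in `F^{∘m} = X` gives `F(0) = 0` and `α₁ ^ m = 1`;
as `α₁ ≡ 1` and `m` is a unit, `α₁ = 1`. If moreover `F ≡ X mod X ^ d` with `d ≥ 2`, then
`F^{∘t} ≡ X + t (F - X) mod X ^ (d + 1)` for every `t`, so `F^{∘m} = X` forces
`m (F - X) ≡ 0`, i.e. `F ≡ X mod X ^ (d + 1)`. Induction on `d` gives `F = X`.
-/

open PowerSeries

/-- Composition `F ∘ G` of formal power series, valid when `G` has zero constant term. -/
noncomputable def psComp {R : Type*} [CommRing R] (F G : PowerSeries R) : PowerSeries R :=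
  PowerSeries.mk fun n => ∑ k ∈ Finset.range (n + 1), coeff k F * coeff n (G ^ k)

/-- `m`-th compositional iterate `F^{∘m}`. -/
noncomputable def psIter {R : Type*} [CommRing R] : ℕ → PowerSeries R → PowerSeries R
  | 0, _ => PowerSeries.X
  | m + 1, F => psComp F (psIter m F)

theorem pow_add_dvd_pow_succ_sub_pow_succ {R : Type*} [CommRing R] {x h : R} {d : ℕ}
    (hx : x ∣ h) (hd : x ^ d ∣ h - x) (k : ℕ) :
    x ^ (d + k) ∣ h ^ (k + 1) - x ^ (k + 1) := by
  induction k with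
  | zero => simpa using hd
  | succ k ih =>
    have hsplit : h ^ (k + 2) - x ^ (k + 2) =
        h * (h ^ (k + 1) - x ^ (k + 1)) + x ^ (k + 1) * (h - x) := by
      ring
    rw [hsplit]
    refine dvd_add ?_ ?_
    · rw [← add_assoc, pow_succ']
      exact mul_dvd_mul hx ih
    · rw [add_comm, pow_add]
      exact mul_dvd_mul_left _ hd

section LocalRing

open IsLocalRing

variable {R : Type*} [CommRing R] [IsLocalRing R]

theorem isUnit_natCast_of_coprime {m p : ℕ} (hp : (p : R) ∈ maximalIdeal R)
    (hmp : Nat.gcd m p = 1) : IsUnit (m : R) := by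
  obtain ⟨u, v, huv⟩ := (Nat.isCoprime_iff_coprime.mpr hmp).map (Int.castRingHom R)
  simp only [eq_intCast, Int.cast_natCast] at huv
  rcases isUnit_or_isUnit_of_add_one huv with hu | hv
  · exact isUnit_of_mul_isUnit_right hu
  · exact absurd (isUnit_of_mul_isUnit_right hv) ((mem_maximalIdeal _).mp hp)

theorem eq_one_of_pow_eq_one_of_sub_one_mem {a : R} {m : ℕ} (hm : IsUnit (m : R))
    (ha : a - 1 ∈ maximalIdeal R) (hpow : a ^ m = 1) : a = 1 := by
  have ha' : residue R a = 1 := by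
    rwa [← sub_eq_zero, ← map_one (residue R), ← map_sub, residue_eq_zero_iff]
  -- the geometric sum `1 + a + ⋯ + a ^ (m - 1)` reduces to the unit `m`
  have hgeom : IsUnit (∑ i ∈ Finset.range m, a ^ i) := by
    rw [← residue_ne_zero_iff_isUnit, map_sum]
    simpa [ha'] using (residue_ne_zero_iff_isUnit _).mpr hm
  rw [← sub_eq_zero, ← hgeom.mul_right_eq_zero, geom_sum_mul, hpow, sub_self]

end LocalRing

section Composition

variable {R : Type*} [CommRing R]

theorem coeff_psComp (F G : R⟦X⟧) (n : ℕ) :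
    coeff n (psComp F G) = ∑ k ∈ Finset.range (n + 1), coeff k F * coeff n (G ^ k) :=
  coeff_mk _ _

theorem coeff_zero_psComp (F G : R⟦X⟧) : coeff 0 (psComp F G) = coeff 0 F := by
  simp [coeff_psComp]

theorem coeff_one_psComp (F G : R⟦X⟧) : coeff 1 (psComp F G) = coeff 1 F * coeff 1 G := by
  simp [coeff_psComp, Finset.sum_range_succ, coeff_one]

theorem coeff_zero_psIter_succ (F : R⟦X⟧) (t : ℕ) : coeff 0 (psIter (t + 1) F) = coeff 0 F :=
  coeff_zero_psComp F _

theorem coeff_one_psIter (F : R⟦X⟧) (t : ℕ) : coeff 1 (psIter t F) = coeff 1 F ^ t := by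
  induction t with
  | zero => simp [psIter]
  | succ t ih => rw [psIter, coeff_one_psComp, ih, pow_succ']

theorem X_pow_two_dvd_sub_X {F : R⟦X⟧} (h0 : coeff 0 F = 0) (h1 : coeff 1 F = 1) :
    X ^ 2 ∣ F - X := by
  rw [X_pow_dvd_iff]
  intro j hj
  interval_cases j
  · simpa using h0
  · simp [h1]

theorem coeff_psComp_of_le {G H : R⟦X⟧} {d j : ℕ} (hd : 1 ≤ d) (hH : X ^ d ∣ H - X)
    (hj : j ≤ d) : coeff j (psComp G H) = coeff j G + coeff 1 G * coeff j (H - X) := by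
  have hXH : X ∣ H := by
    simpa using dvd_add ((dvd_pow_self X (by omega)).trans hH) (dvd_refl X)
  have hpow (k : ℕ) (hk : 2 ≤ k) : coeff j (H ^ k) = coeff j (X ^ k) := by
    obtain ⟨k, rfl⟩ := Nat.exists_eq_add_of_le' hk
    have := (pow_dvd_pow X (by omega : d + 1 ≤ d + (k + 1))).trans
      (pow_add_dvd_pow_succ_sub_pow_succ hXH hH (k + 1))
    rw [← sub_eq_zero, ← map_sub]
    exact X_pow_dvd_iff.mp this j (by omega)
  have hG : coeff j G = ∑ k ∈ Finset.range (j + 1), coeff k G * coeff j (X ^ k) := by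
    simp [coeff_X_pow]
  rw [coeff_psComp, hG, ← sub_eq_iff_eq_add', ← Finset.sum_sub_distrib]
  simp_rw [← mul_sub, ← map_sub]
  rw [Finset.sum_eq_single 1 (fun k _ hk1 => ?_) (fun h1 => ?_), pow_one, pow_one]
  · rcases k with _ | _ | k
    · simp
    · exact absurd rfl hk1
    · rw [map_sub, hpow _ (by omega), sub_self, mul_zero]
  · obtain rfl : j = 0 := by simpa using h1
    simp [X_dvd_iff.mp hXH]

theorem X_pow_succ_dvd_psIter_sub {F : R⟦X⟧} {d : ℕ} (hd : 2 ≤ d) (hF : X ^ d ∣ F - X)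
    (t : ℕ) : X ^ (d + 1) ∣ psIter t F - X - t • (F - X) := by
  induction t with
  | zero => simp [psIter]
  | succ t ih =>
    have hIter : X ^ d ∣ psIter t F - X := by
      have := dvd_add ((pow_dvd_pow X d.le_succ).trans ih) (Dvd.dvd.mul_left hF (t : R⟦X⟧))
      rwa [← nsmul_eq_mul, sub_add_cancel] at this
    have hF1 : coeff 1 F = 1 := by
      simpa [sub_eq_zero] using X_pow_dvd_iff.mp hF 1 (by omega)
    rw [X_pow_dvd_iff]
    intro j hj
    have hIj := X_pow_dvd_iff.mp ih j hj
    rw [map_sub, map_sub, map_nsmul, nsmul_eq_mul] at hIj ⊢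
    rw [psIter, coeff_psComp_of_le (by omega) hIter (by omega), hF1]
    simp only [map_sub, Nat.cast_succ] at hIj ⊢
    linear_combination hIj

theorem eq_X_of_psIter_eq_X {F : R⟦X⟧} {m : ℕ} (hm : IsUnit (m : R))
    (hF : X ^ 2 ∣ F - X) (hiter : psIter m F = X) : F = X := by
  have hdvd (d : ℕ) (hd : 2 ≤ d) : X ^ d ∣ F - X := by
    induction d, hd using Nat.le_induction with
    | base => exact hF
    | succ d hd ih =>
      have := X_pow_succ_dvd_psIter_sub hd ih m
      rwa [hiter, sub_self, zero_sub, dvd_neg, nsmul_eq_mul, ← map_natCast (C (R := R)),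
        (hm.map C).dvd_mul_left] at this
  rw [← sub_eq_zero]
  ext n
  simpa using X_pow_dvd_iff.mp (hdvd (n + 2) (by omega)) n (by omega)

end Composition

theorem stmt_7_general {O : Type*} [CommRing O] [IsDomain O] [IsDiscreteValuationRing O]
    (p : ℕ) (hres : (p : O) ∈ IsLocalRing.maximalIdeal O)
    (F : PowerSeries O)
    (h1 : coeff 1 F - 1 ∈ IsLocalRing.maximalIdeal O)
    (m : ℕ) (hm : 1 ≤ m) (hmp : Nat.gcd m p = 1)
    (hiter : psIter m F = PowerSeries.X) :
    F = PowerSeries.X := by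
  have hmu : IsUnit (m : O) := isUnit_natCast_of_coprime hres hmp
  have hF0 : coeff 0 F = 0 := by
    obtain ⟨t, rfl⟩ := Nat.exists_eq_add_of_le' hm
    simpa [hiter] using (coeff_zero_psIter_succ F t).symm
  have hF1 : coeff 1 F = 1 := by
    refine eq_one_of_pow_eq_one_of_sub_one_mem hmu h1 ?_
    simpa [hiter] using (coeff_one_psIter F m).symm
  exact eq_X_of_psIter_eq_X hmu (X_pow_two_dvd_sub_X hF0 hF1) hiter

/-- Let `O` be a complete discrete valuation ring with maximal ideal `𝔭`
and residue characteristic `p`.  Let `F(T) = α₀ + α₁ T + ⋯ ∈ O[[T]]` with `v(α₀) > 0`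
(i.e. `α₀ ∈ 𝔭`), suppose the `m`-th compositional iterate of `F` is `T` with
`gcd(m, p) = 1`, and suppose `α₁ ≡ 1 mod 𝔭`.  Then `F(T) = T`. -/
theorem stmt_7 {O : Type*} [CommRing O] [IsDomain O] [IsDiscreteValuationRing O]
    [IsAdicComplete (IsLocalRing.maximalIdeal O) O]
    (p : ℕ) (hp : p.Prime) (hres : (p : O) ∈ IsLocalRing.maximalIdeal O)
    (F : PowerSeries O)
    (h0 : coeff 0 F ∈ IsLocalRing.maximalIdeal O)
    (h1 : coeff 1 F - 1 ∈ IsLocalRing.maximalIdeal O)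
    (m : ℕ) (hm : 1 ≤ m) (hmp : Nat.gcd m p = 1)
    (hiter : psIter m F = PowerSeries.X) :
    F = PowerSeries.X :=
  stmt_7_general p hres F h1 m hm hmp hiter
end

section
/- Let K be a finite extension of Q_p with ring of integers O, uniformizer π, normalized valuation v, and e = v(p). Let λ(T) = c + a_0 π T + (a_1/2) π² T² + ⋯ + (a_m/(m+1)) π^{m+1} T^{m+1} + ⋯ be a power series (convergent on O) where a_i ∈ O, v(a_i) > 0 for i < n, and a_n is a unit. Then λ has at most n + 1 + δ(v, n) zeros in O, where δ(v, n) = max{ d ≥ 0 : e·v_p(n+1) + d ≤ e·v_p(n+d+1) }. -/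
/-- The coefficients of the power series
`λ(T) = c + a₀ π T + (a₁/2) π² T² + ⋯ + (a_m/(m+1)) π^{m+1} T^{m+1} + ⋯`. -/
noncomputable def lamCoeff {K : Type*} [Field K] (c : K) (a : ℕ → K) (π : K) :
    ℕ → K :=
  fun m => if m = 0 then c else a (m - 1) * π ^ m / (m : K)

/-!
Write `ρ = ‖π‖`. Since `‖m‖ = ‖p‖^{v_p(m)} = ρ^{e v_p(m)}`, the `m`-th coefficient of `λ` has
norm `‖a_{m-1}‖ ρ^{m - e v_p(m)}`. These norms tend to `0`, the `(n+1)`-st equals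
`ρ^{n+1 - e v_p(n+1)}` because `a_n` is a unit, and the definition of `δ` says exactly that
every coefficient of index `m > n + 1 + δ` is strictly smaller. Hence the last index of a
coefficient of maximal norm is at most `n + 1 + δ`, and Strassmann's theorem bounds the number
of zeros in the unit ball by that index. Strassmann's theorem is proved by induction on the
index: dividing the series by `x - r` at a zero `r` lowers the index by one.
-/

open Filter Topology

lemma exists_forall_le_of_tendsto_zero {f : ℕ → ℝ} (hf : Tendsto f atTop (𝓝 0))
    (hf₀ : ∀ i, 0 ≤ f i) : ∃ i₀, ∀ i, f i ≤ f i₀ := by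
  by_cases hpos : ∃ i₀, 0 < f i₀
  · obtain ⟨i₀, hi₀⟩ := hpos
    refine continuous_of_discreteTopology.exists_forall_ge' i₀ ?_
    rw [cocompact_eq_atTop]
    exact hf.eventually (ge_mem_nhds hi₀)
  · push Not at hpos
    exact ⟨0, fun i => (hpos i).trans (hf₀ 0)⟩

lemma exists_last_argmax_le_of_forall_lt {f : ℕ → ℝ} {k N : ℕ} (h : ∀ m, N < m → f m < f k) :
    ∃ M ≤ N, (∀ m, f m ≤ f M) ∧ ∀ m, M < m → f m < f M := by
  classical
  obtain ⟨i, hi, hmax⟩ := (Finset.range (N + 1)).exists_max_image f ⟨0, by simp⟩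
  have hk : k ≤ N := not_lt.1 fun hk => (h k hk).false
  have hi_max : ∀ m, f m ≤ f i := fun m => by
    rcases le_or_gt m N with hm | hm
    · exact hmax m (Finset.mem_range.2 (by omega))
    · exact (h m hm).le.trans (hmax k (Finset.mem_range.2 (by omega)))
  let IsArgmax (m : ℕ) : Prop := ∀ j, f j ≤ f m
  set M := Nat.findGreatest IsArgmax N
  have hM : IsArgmax M :=
    Nat.findGreatest_spec (P := IsArgmax) (Nat.lt_succ_iff.1 (Finset.mem_range.1 hi)) hi_max
  refine ⟨M, Nat.findGreatest_le N, hM, fun m hm => ?_⟩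
  rcases le_or_gt m N with hmN | hmN
  · obtain ⟨j, hj⟩ : ∃ j, f m < f j := by
      simpa [IsArgmax] using Nat.findGreatest_is_greatest hm hmN
    exact hj.trans_le (hM j)
  · exact (h m hmN).trans_le (hM k)

namespace IsUltrametricDist

variable {E : Type*} [SeminormedAddCommGroup E] [IsUltrametricDist E]

lemma norm_tsum_lt_of_forall_norm_lt {g : ℕ → E} (hg : Tendsto g atTop (𝓝 0)) {B : ℝ}
    (h : ∀ i, ‖g i‖ < B) : ‖∑' i, g i‖ < B := by
  obtain ⟨i₀, hi₀⟩ := exists_forall_le_of_tendsto_zero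
    (tendsto_zero_iff_norm_tendsto_zero.1 hg) fun i => norm_nonneg _
  exact (norm_tsum_le_of_forall_le hi₀).trans_lt (h i₀)

lemma norm_add_eq_left_of_norm_lt {x y : E} (h : ‖y‖ < ‖x‖) : ‖x + y‖ = ‖x‖ := by
  rw [norm_add_eq_max_of_norm_ne_norm h.ne', max_eq_left h.le]

end IsUltrametricDist

open IsUltrametricDist

lemma norm_mul_pow_le {K : Type*} [NormedDivisionRing K] {x : K} (hx : ‖x‖ ≤ 1) (u : K) (m : ℕ) :
    ‖u * x ^ m‖ ≤ ‖u‖ := by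
  rw [norm_mul, norm_pow]
  exact mul_le_of_le_one_right (norm_nonneg _) (pow_le_one₀ (norm_nonneg _) hx)

lemma tendsto_mul_pow_zero {K : Type*} [NormedDivisionRing K] {c : ℕ → K}
    (hc : Tendsto c atTop (𝓝 0)) {x : K} (hx : ‖x‖ ≤ 1) :
    Tendsto (fun m => c m * x ^ m) atTop (𝓝 0) :=
  squeeze_zero_norm (fun m => norm_mul_pow_le hx (c m) m) (tendsto_zero_iff_norm_tendsto_zero.1 hc)

section PowerSeries

variable {K : Type*} [NormedField K] [IsUltrametricDist K] {c : ℕ → K} {r : K}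

/-- The coefficients of `(∑ c m x ^ m) / (x - r)` when `r` is a zero of the numerator. -/
noncomputable def divCoeff (c : ℕ → K) (r : K) (j : ℕ) : K := ∑' k, c (k + (j + 1)) * r ^ k

lemma norm_divCoeff_le (hr : ‖r‖ ≤ 1) {j : ℕ} {B : ℝ} (hB : ∀ m, j < m → ‖c m‖ ≤ B) :
    ‖divCoeff c r j‖ ≤ B :=
  norm_tsum_le_of_forall_le fun k => (norm_mul_pow_le hr _ _).trans (hB _ (by omega))

lemma norm_divCoeff_lt (hc : Tendsto c atTop (𝓝 0)) (hr : ‖r‖ ≤ 1) {j : ℕ} {B : ℝ}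
    (hB : ∀ m, j < m → ‖c m‖ < B) : ‖divCoeff c r j‖ < B :=
  norm_tsum_lt_of_forall_norm_lt
    (tendsto_mul_pow_zero (c := fun k => c (k + (j + 1))) (hc.comp (tendsto_add_atTop_nat _)) hr)
    fun k => (norm_mul_pow_le hr _ _).trans_lt (hB _ (by omega))

lemma tendsto_divCoeff (hc : Tendsto c atTop (𝓝 0)) (hr : ‖r‖ ≤ 1) :
    Tendsto (divCoeff c r) atTop (𝓝 0) := by
  refine Metric.tendsto_atTop.2 fun ε hε => ?_
  obtain ⟨M, hM⟩ := Metric.tendsto_atTop.1 hc ε hε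
  simp only [dist_zero_right] at hM ⊢
  exact ⟨M, fun j hj => norm_divCoeff_lt hc hr fun m hm => hM m (by omega)⟩

variable [CompleteSpace K]

lemma summable_mul_pow (hc : Tendsto c atTop (𝓝 0)) {x : K} (hx : ‖x‖ ≤ 1) :
    Summable fun m => c m * x ^ m :=
  NonarchimedeanAddGroup.summable_of_tendsto_cofinite_zero
    (Nat.cofinite_eq_atTop ▸ tendsto_mul_pow_zero hc hx)

def unitBallZeros (c : ℕ → K) : Set K := {x | ‖x‖ ≤ 1 ∧ ∑' m, c m * x ^ m = 0}

lemma unitBallZeros_eq_setOf_tendsto (hc : Tendsto c atTop (𝓝 0)) :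
    unitBallZeros c = {x | ‖x‖ ≤ 1 ∧
      Tendsto (fun N => ∑ m ∈ Finset.range N, c m * x ^ m) atTop (𝓝 0)} := by
  ext x
  refine and_congr_right fun hx => ?_
  rw [← (summable_mul_pow hc hx).hasSum_iff_tendsto_nat, (summable_mul_pow hc hx).hasSum_iff]

lemma unitBallZeros_eq_empty (hc : Tendsto c atTop (𝓝 0)) (hlt : ∀ m, 0 < m → ‖c m‖ < ‖c 0‖) :
    unitBallZeros c = ∅ := by
  refine Set.eq_empty_of_forall_notMem fun x ⟨hx, hzero⟩ => ?_
  have htail : ‖∑' m, c (m + 1) * x ^ (m + 1)‖ < ‖c 0‖ :=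
    norm_tsum_lt_of_forall_norm_lt ((tendsto_mul_pow_zero hc hx).comp (tendsto_add_atTop_nat 1))
      fun m => (norm_mul_pow_le hx _ _).trans_lt (hlt _ m.succ_pos)
  rw [(summable_mul_pow hc hx).tsum_eq_zero_add, pow_zero, mul_one] at hzero
  have hc0 : ‖c 0‖ = 0 := by rw [← norm_add_eq_left_of_norm_lt htail, hzero, norm_zero]
  exact (norm_nonneg _).not_gt (hc0 ▸ htail)

lemma divCoeff_eq_add (hc : Tendsto c atTop (𝓝 0)) (hr : ‖r‖ ≤ 1) (j : ℕ) :
    divCoeff c r j = c (j + 1) + r * divCoeff c r (j + 1) := by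
  rw [divCoeff, (summable_mul_pow (c := fun k => c (k + (j + 1)))
    (hc.comp (tendsto_add_atTop_nat _)) hr).tsum_eq_zero_add,
    divCoeff, ← tsum_mul_left]
  congr 1
  · simp
  · refine tsum_congr fun k => ?_
    rw [show k + 1 + (j + 1) = k + (j + 1 + 1) by ring, pow_succ]
    ring

/-- Telescoping: `divCoeff c r j - r * divCoeff c r (j + 1) = c (j + 1)`. -/
lemma sub_mul_tsum_divCoeff (hc : Tendsto c atTop (𝓝 0)) (hr : ‖r‖ ≤ 1) {x : K} (hx : ‖x‖ ≤ 1) :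
    (x - r) * ∑' j, divCoeff c r j * x ^ j = ∑' m, c m * x ^ m - ∑' m, c m * r ^ m := by
  have hS := (summable_mul_pow (tendsto_divCoeff hc hr) hx).hasSum
  set S := ∑' j, divCoeff c r j * x ^ j
  have hfx := (hasSum_nat_add_iff' 1).2 (summable_mul_pow hc hx).hasSum
  have hfr : ∑' m, c m * r ^ m = c 0 + r * divCoeff c r 0 := by
    rw [(summable_mul_pow hc hr).tsum_eq_zero_add, divCoeff, ← tsum_mul_left, pow_zero, mul_one]
    simp only [zero_add]
    exact congrArg _ (tsum_congr fun k => by ring)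
  have h1 : HasSum (fun j => divCoeff c r j * x ^ (j + 1)) (x * S) := by
    simpa [pow_succ, mul_comm, mul_left_comm] using hS.mul_left x
  have h2 : HasSum (fun j => r * (divCoeff c r (j + 1) * x ^ (j + 1)))
      (r * S - r * divCoeff c r 0) := by
    simpa using (hasSum_nat_add_iff' 1).2 (hS.mul_left r)
  have h3 : HasSum (fun j => c (j + 1) * x ^ (j + 1)) (x * S - (r * S - r * divCoeff c r 0)) := by
    refine (h1.sub h2).congr_fun fun j => ?_
    rw [divCoeff_eq_add hc hr j]
    ring
  have key := h3.unique hfx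
  rw [Finset.sum_range_one, pow_zero, mul_one] at key
  rw [hfr]
  linear_combination key

lemma unitBallZeros_subset_insert (hc : Tendsto c atTop (𝓝 0)) (hr : r ∈ unitBallZeros c) :
    unitBallZeros c ⊆ insert r (unitBallZeros (divCoeff c r)) := by
  rintro x ⟨hx, hfx⟩
  rcases eq_or_ne x r with rfl | hxr
  · exact Set.mem_insert _ _
  refine Set.mem_insert_of_mem _ ⟨hx, ?_⟩
  have := sub_mul_tsum_divCoeff hc hr.1 hx
  rw [hfx, hr.2, sub_zero] at this
  exact (mul_eq_zero.1 this).resolve_left (sub_ne_zero.2 hxr)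

/-- Strassmann's theorem. -/
theorem encard_unitBallZeros_le (N : ℕ) (hc : Tendsto c atTop (𝓝 0)) (hN : c N ≠ 0)
    (hle : ∀ m, ‖c m‖ ≤ ‖c N‖) (hlt : ∀ m, N < m → ‖c m‖ < ‖c N‖) :
    (unitBallZeros c).encard ≤ N := by
  induction N generalizing c with
  | zero => simp [unitBallZeros_eq_empty hc hlt]
  | succ N ih =>
    obtain hempty | ⟨r, hr⟩ := (unitBallZeros c).eq_empty_or_nonempty
    · simp [hempty]
    have hr1 := hr.1
    have hltN : ‖divCoeff c r (N + 1)‖ < ‖c (N + 1)‖ :=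
      norm_divCoeff_lt hc hr1 fun m hm => hlt m (by omega)
    have hbN : ‖divCoeff c r N‖ = ‖c (N + 1)‖ := by
      rw [divCoeff_eq_add hc hr1]
      refine norm_add_eq_left_of_norm_lt (lt_of_le_of_lt ?_ hltN)
      rw [norm_mul]
      exact mul_le_of_le_one_left (norm_nonneg _) hr1
    have hb : (unitBallZeros (divCoeff c r)).encard ≤ N :=
      ih (tendsto_divCoeff hc hr1) (norm_ne_zero_iff.1 (hbN ▸ norm_ne_zero_iff.2 hN))
        (fun j => hbN ▸ norm_divCoeff_le hr1 fun m _ => hle m)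
        (fun j hj => hbN ▸ norm_divCoeff_lt hc hr1 fun m hm => hlt m (by omega))
    calc (unitBallZeros c).encard
        ≤ (insert r (unitBallZeros (divCoeff c r))).encard :=
          Set.encard_le_encard (unitBallZeros_subset_insert hc hr)
      _ ≤ (unitBallZeros (divCoeff c r)).encard + 1 := Set.encard_insert_le _ _
      _ ≤ N + 1 := by gcongr

theorem encard_unitBallZeros_le_of_norm_lt {k N : ℕ} (hc : Tendsto c atTop (𝓝 0)) (hk : c k ≠ 0)
    (hlt : ∀ m, N < m → ‖c m‖ < ‖c k‖) : (unitBallZeros c).encard ≤ N := by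
  obtain ⟨M, hMN, hle, hltM⟩ := exists_last_argmax_le_of_forall_lt hlt
  have hM : c M ≠ 0 := norm_ne_zero_iff.1 ((norm_pos_iff.2 hk).trans_le (hle k)).ne'
  exact (encard_unitBallZeros_le M hc hM hle hltM).trans (by exact_mod_cast hMN)

end PowerSeries

lemma eventually_add_mul_lt_two_pow (a b : ℕ) : ∀ᶠ k in atTop, a + b * k < 2 ^ k := by
  filter_upwards [(isLittleO_coe_const_pow_of_one_lt (R := ℝ) one_lt_two).bound
    (c := 1 / (a + b + 1)) (by positivity), eventually_ge_atTop 1] with k hk hk1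
  rw [Real.norm_natCast, norm_pow, Real.norm_two, div_mul_eq_mul_div, one_mul,
    le_div_iff₀ (by positivity)] at hk
  have hk' : k * (a + b + 1) ≤ 2 ^ k := by exact_mod_cast hk
  nlinarith

lemma eventually_mul_padicValNat_add_le {p : ℕ} (hp : p.Prime) (e b : ℕ) :
    ∀ᶠ m in atTop, e * padicValNat p m + b ≤ m := by
  obtain ⟨D, hD⟩ := eventually_atTop.1 (eventually_add_mul_lt_two_pow b e)
  filter_upwards [eventually_ge_atTop (e * D + b + 1)] with m hm
  have hpow : 2 ^ padicValNat p m ≤ m := (Nat.pow_le_pow_left hp.two_le _).trans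
    (Nat.le_of_dvd (by omega) pow_padicValNat_dvd)
  rcases le_or_gt D (padicValNat p m) with h | h
  · have := hD _ h
    omega
  · have := Nat.mul_le_mul_left e h.le
    omega

lemma bddAbove_setOf_deltaFn {p : ℕ} (hp : p.Prime) (e n : ℕ) :
    BddAbove {d : ℕ | e * padicValNat p (n + 1) + d ≤ e * padicValNat p (n + d + 1)} := by
  obtain ⟨M, hM⟩ := eventually_atTop.1 (eventually_mul_padicValNat_add_le hp e (n + 2))
  refine bddAbove_def.2 ⟨M, fun d hd => ?_⟩
  rw [Set.mem_ofPred_eq] at hd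
  by_contra! h
  have := hM (n + d + 1) (by omega)
  omega

lemma mul_padicValNat_add_lt_of_deltaFn_lt {p e n m : ℕ} (hp : p.Prime)
    (hm : n + 1 + deltaFn p e n < m) :
    e * padicValNat p m + (n + 1) < e * padicValNat p (n + 1) + m := by
  by_contra! h
  have : m - (n + 1) ≤ deltaFn p e n := le_csSup (bddAbove_setOf_deltaFn hp e n) <| by
    rw [Set.mem_ofPred_eq, show n + (m - (n + 1)) + 1 = m by omega]
    omega
  omega

section NormedField

variable {K : Type*} [NormedField K] [IsUltrametricDist K] {p : ℕ}

lemma norm_natCast_eq_one_of_not_dvd (hp : p.Prime) (hpK : ‖(p : K)‖ < 1) {u : ℕ}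
    (hu : ¬p ∣ u) : ‖(u : K)‖ = 1 := by
  have hgcd := Nat.gcd_eq_gcd_ab u p
  rw [Nat.Coprime.gcd_eq_one ((Nat.coprime_comm.1 ((hp.coprime_iff_not_dvd).2 hu)))] at hgcd
  have hK : (u : K) * (u.gcdA p : K) + (p : K) * (u.gcdB p : K) = 1 := by
    simpa using (congrArg (Int.cast : ℤ → K) hgcd).symm
  have hsmall : ‖(p : K) * (u.gcdB p : K)‖ < 1 := by
    rw [norm_mul]
    exact mul_lt_one_of_nonneg_of_lt_one_left (norm_nonneg _) hpK (norm_intCast_le_one K _)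
  have hbig : 1 ≤ ‖(u : K) * (u.gcdA p : K)‖ := by
    have := hK ▸ norm_add_le_max ((u : K) * (u.gcdA p : K)) ((p : K) * (u.gcdB p : K))
    rw [norm_one] at this
    exact (le_max_iff.1 this).resolve_right hsmall.not_ge
  refine le_antisymm (norm_natCast_le_one K _) (hbig.trans ?_)
  rw [norm_mul]
  exact mul_le_of_le_one_right (norm_nonneg _) (norm_intCast_le_one K _)

lemma norm_natCast_eq_pow_padicValNat (hp : p.Prime) (hpK : ‖(p : K)‖ < 1) {m : ℕ} (hm : m ≠ 0) :
    ‖(m : K)‖ = ‖(p : K)‖ ^ padicValNat p m := by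
  conv_lhs => rw [← Nat.ordProj_mul_ordCompl_eq_self m p]
  rw [Nat.cast_mul, norm_mul, Nat.cast_pow, norm_pow,
    norm_natCast_eq_one_of_not_dvd hp hpK (Nat.not_dvd_ordCompl hp hm), mul_one,
    Nat.factorization_def m hp]

variable {e n : ℕ} {π : K} {c : K} {a : ℕ → K}

lemma norm_lamCoeff (hp : p.Prime) (he : 1 ≤ e) (hπ1 : ‖π‖ < 1) (hpπ : ‖(p : K)‖ = ‖π‖ ^ e)
    {m : ℕ} (hm : m ≠ 0) :
    ‖lamCoeff c a π m‖ = ‖a (m - 1)‖ * ‖π‖ ^ m / ‖π‖ ^ (e * padicValNat p m) := by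
  have hpK : ‖(p : K)‖ < 1 := hpπ ▸ pow_lt_one₀ (norm_nonneg _) hπ1 (by omega)
  rw [lamCoeff, if_neg hm, norm_div, norm_mul, norm_pow,
    norm_natCast_eq_pow_padicValNat hp hpK hm, hpπ, ← pow_mul]

lemma tendsto_lamCoeff (hp : p.Prime) (he : 1 ≤ e) (hπ0 : 0 < ‖π‖) (hπ1 : ‖π‖ < 1)
    (hpπ : ‖(p : K)‖ = ‖π‖ ^ e) (ha : ∀ i, ‖a i‖ ≤ 1) :
    Tendsto (lamCoeff c a π) atTop (𝓝 0) := by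
  have hexp : Tendsto (fun m => m - e * padicValNat p m) atTop atTop :=
    tendsto_atTop.2 fun j => (eventually_mul_padicValNat_add_le hp e j).mono fun m hm => by omega
  refine squeeze_zero_norm' ?_ ((tendsto_pow_atTop_nhds_zero_of_lt_one hπ0.le hπ1).comp hexp)
  filter_upwards [eventually_mul_padicValNat_add_le hp e 1] with m hm
  rw [norm_lamCoeff hp he hπ1 hpπ (by omega), Function.comp_apply, pow_sub₀ _ hπ0.ne' (by omega),
    mul_div_assoc, div_eq_mul_inv]
  exact mul_le_of_le_one_left (by positivity) (ha _)

lemma norm_lamCoeff_lt (hp : p.Prime) (he : 1 ≤ e) (hπ0 : 0 < ‖π‖) (hπ1 : ‖π‖ < 1)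
    (hpπ : ‖(p : K)‖ = ‖π‖ ^ e) (ha : ∀ i, ‖a i‖ ≤ 1) (han : ‖a n‖ = 1) {m : ℕ}
    (hm : n + 1 + deltaFn p e n < m) : ‖lamCoeff c a π m‖ < ‖lamCoeff c a π (n + 1)‖ := by
  rw [norm_lamCoeff hp he hπ1 hpπ (by omega), norm_lamCoeff hp he hπ1 hpπ (by omega),
    Nat.add_sub_cancel, han, one_mul]
  calc ‖a (m - 1)‖ * ‖π‖ ^ m / ‖π‖ ^ (e * padicValNat p m)
      ≤ ‖π‖ ^ m / ‖π‖ ^ (e * padicValNat p m) := by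
        gcongr
        exact mul_le_of_le_one_left (by positivity) (ha _)
    _ < ‖π‖ ^ (n + 1) / ‖π‖ ^ (e * padicValNat p (n + 1)) := by
        rw [div_lt_div_iff₀ (by positivity) (by positivity), ← pow_add, ← pow_add]
        exact pow_lt_pow_right_of_lt_one₀ hπ0 hπ1 (by
          have := mul_padicValNat_add_lt_of_deltaFn_lt (e := e) hp hm
          omega)

variable [CompleteSpace K]

theorem encard_unitBallZeros_lamCoeff_le (hp : p.Prime) (he : 1 ≤ e) (hπ0 : 0 < ‖π‖)
    (hπ1 : ‖π‖ < 1) (hpπ : ‖(p : K)‖ = ‖π‖ ^ e) (ha : ∀ i, ‖a i‖ ≤ 1) (han : ‖a n‖ = 1) :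
    (unitBallZeros (lamCoeff c a π)).encard ≤ n + 1 + deltaFn p e n := by
  have hne : lamCoeff c a π (n + 1) ≠ 0 := by
    rw [← norm_pos_iff, norm_lamCoeff hp he hπ1 hpπ (by omega), Nat.add_sub_cancel, han]
    positivity
  exact encard_unitBallZeros_le_of_norm_lt (tendsto_lamCoeff hp he hπ0 hπ1 hpπ ha) hne
    fun m hm => norm_lamCoeff_lt hp he hπ0 hπ1 hpπ ha han hm

end NormedField

open scoped WithZero

theorem stmt_11_general {K : Type*} [Field K] [Valued K (WithZero (Multiplicative ℤ))]
    [CompleteSpace K]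
    (p : ℕ) (hp : p.Prime) (e : ℕ) (he : 1 ≤ e)
    (π : K)
    (hπ : Valued.v π = ((Multiplicative.ofAdd (-1 : ℤ) : Multiplicative ℤ) :
      WithZero (Multiplicative ℤ)))
    (hpval : Valued.v (p : K) = ((Multiplicative.ofAdd (-(e : ℤ)) : Multiplicative ℤ) :
      WithZero (Multiplicative ℤ)))
    (c : K) (a : ℕ → K) (n : ℕ)
    (ha : ∀ i, Valued.v (a i) ≤ 1)
    (han : Valued.v (a n) = 1) :
    {x : K | Valued.v x ≤ 1 ∧
        Filter.Tendsto (fun N => ∑ m ∈ Finset.range N, lamCoeff c a π m * x ^ m)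
          Filter.atTop (nhds 0)}.Finite ∧
      {x : K | Valued.v x ≤ 1 ∧
        Filter.Tendsto (fun N => ∑ m ∈ Finset.range N, lamCoeff c a π m * x ^ m)
          Filter.atTop (nhds 0)}.ncard ≤ n + 1 + deltaFn p e n := by
  rw [← WithZero.exp_eq_coe_ofAdd] at hπ hpval
  have : (Valued.v : Valuation K ℤᵐ⁰).IsNontrivial := ⟨π, by simp [hπ], by simp [hπ]⟩
  let : (Valued.v : Valuation K ℤᵐ⁰).RankOne := Valuation.IsRankOneDiscrete.rankOne _ one_lt_two
  let := Valued.toNormedField K ℤᵐ⁰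
  have hπ0 : 0 < ‖π‖ := norm_pos_iff.2 fun h => WithZero.exp_ne_zero (by rw [← hπ, h, map_zero])
  have hπ1 : ‖π‖ < 1 := Valued.toNormedField.norm_lt_one_iff.2 (by
    rw [hπ, ← WithZero.exp_zero, WithZero.exp_lt_exp]
    norm_num)
  have hpπ : ‖(p : K)‖ = ‖π‖ ^ e := by
    have hv : Valued.v (p : K) = Valued.v (π ^ e) := by
      rw [hpval, map_pow, hπ, ← WithZero.exp_nsmul, WithZero.exp_inj]
      simp
    rw [← norm_pow]
    exact le_antisymm (Valued.toNormedField.norm_le_iff.2 hv.le)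
      (Valued.toNormedField.norm_le_iff.2 hv.ge)
  have ha' : ∀ i, ‖a i‖ ≤ 1 := fun i => Valued.toNormedField.norm_le_one_iff.2 (ha i)
  have han' : ‖a n‖ = 1 := le_antisymm (Valued.toNormedField.norm_le_one_iff.2 han.le)
    (Valued.toNormedField.one_le_norm_iff.2 han.ge)
  have hzeros := unitBallZeros_eq_setOf_tendsto (tendsto_lamCoeff (c := c) hp he hπ0 hπ1 hpπ ha')
  simp only [Valued.toNormedField.norm_le_one_iff] at hzeros
  rw [← hzeros]
  exact Set.encard_le_coe_iff_finite_ncard_le.1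
    (encard_unitBallZeros_lamCoeff_le hp he hπ0 hπ1 hpπ ha' han')

/-- Let `K` be a finite extension of `ℚ_p` (modelled as a complete
discretely valued field of residue characteristic `p`), with ring of integers
`O = {x : v x ≤ 1}`, uniformizer `π` (`v π = -1` multiplicatively, i.e. `v(π) = 1`
additively normalized) and `e = v(p)`.  Let
`λ(T) = c + a₀ π T + (a₁/2) π² T² + ⋯ + (a_m/(m+1)) π^{m+1} T^{m+1} + ⋯` with
`a_i ∈ O`, `v(a_i) > 0` for `i < n` and `a_n` a unit.  Then `λ` has at most
`n + 1 + δ(v,n)` zeros in `O` (zeros being points of `O` where the partial sums of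
`λ` converge to `0`). -/
theorem stmt_11 {K : Type*} [Field K] [Valued K (WithZero (Multiplicative ℤ))]
    [CompleteSpace K]
    (p : ℕ) (hp : p.Prime) (e : ℕ) (he : 1 ≤ e)
    (π : K)
    (hπ : Valued.v π = ((Multiplicative.ofAdd (-1 : ℤ) : Multiplicative ℤ) :
      WithZero (Multiplicative ℤ)))
    (hpval : Valued.v (p : K) = ((Multiplicative.ofAdd (-(e : ℤ)) : Multiplicative ℤ) :
      WithZero (Multiplicative ℤ)))
    (c : K) (a : ℕ → K) (n : ℕ)
    (ha : ∀ i, Valued.v (a i) ≤ 1)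
    (halow : ∀ i < n, Valued.v (a i) < 1)
    (han : Valued.v (a n) = 1) :
    {x : K | Valued.v x ≤ 1 ∧
        Filter.Tendsto (fun N => ∑ m ∈ Finset.range N, lamCoeff c a π m * x ^ m)
          Filter.atTop (nhds 0)}.Finite ∧
      {x : K | Valued.v x ≤ 1 ∧
        Filter.Tendsto (fun N => ∑ m ∈ Finset.range N, lamCoeff c a π m * x ^ m)
          Filter.atTop (nhds 0)}.ncard ≤ n + 1 + deltaFn p e n :=
  stmt_11_general p hp e he π hπ hpval c a n ha han
end

section
/- Let C be a smooth projective curve of genus g over the residue field k of a discrete valuation ring, with good reduction model, and Λ a nonzero K-linear subspace of the g-dimensional space Ω(C/K) of global regular differentials. Define n(Λ, P) = min{ord_P(ω̄) : 0 ≠ ω ∈ Λ} where ω̄ is a nonzero reduction of (a scalar multiple of) ω, and N(Λ) = Σ_P n(Λ, P) over all closed points P of the special fiber. Then N(Λ) ≤ f_{C/k}(codim Λ) ≤ 2·codim Λ, where f_{C/k}(r) = max{deg D : D ≥ 0 effective with dim Ω(D) ≥ g − r} on the special fiber. -/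
/-- Data of a smooth projective curve `C` of genus `g` over a (`p`-adic) field `K`
with good reduction: `ΩK = Ω(C/K)` is the `g`-dimensional space of global regular
differentials of the generic fiber, `Ωk` that of the special fiber over the residue
field `k`, `Point` the closed points of the special fiber.  `divk ω` is the divisor
of zeros of a nonzero differential `ω` on the special fiber (of canonical degree
`2g−2`); `red` sends a differential to a nonzero reduction of a suitable scalar
multiple, and preserves dimensions of subspaces.  `dimOmega D` is the dimension of
the space `Ω(D)` of differentials on the special fiber vanishing at least on `D`,
and `f_{C/k}(r) ≤ 2r` is guaranteed by Riemann–Roch and Clifford's bound. -/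
structure GoodRedDiffData (K k : Type*) [Field K] [Field k]
    (ΩK Ωk Point : Type*) [AddCommGroup ΩK] [Module K ΩK]
    [AddCommGroup Ωk] [Module k Ωk] where
  g : ℕ
  hg : 1 ≤ g
  rankK : Module.finrank K ΩK = g
  rankk : Module.finrank k Ωk = g
  divk : Ωk → (Point →₀ ℕ)
  div_deg : ∀ ω : Ωk, ω ≠ 0 → divDeg (divk ω) = 2 * g - 2
  div_add : ∀ ω ω' : Ωk, ω ≠ 0 → ω' ≠ 0 → ω + ω' ≠ 0 →
    ∀ P : Point, min (divk ω P) (divk ω' P) ≤ divk (ω + ω') P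
  div_smul : ∀ (aₖ : k) (ω : Ωk), aₖ ≠ 0 → ω ≠ 0 → divk (aₖ • ω) = divk ω
  red : ΩK → Ωk
  red_ne : ∀ ω : ΩK, ω ≠ 0 → red ω ≠ 0
  red_rank : ∀ Λ : Submodule K ΩK,
    Module.finrank k (Submodule.span k (red '' Λ)) = Module.finrank K Λ
  dimOmega : (Point →₀ ℕ) → ℕ
  dimOmega_le : ∀ (D : Point →₀ ℕ) (V : Submodule k Ωk),
    (∀ ω ∈ V, ω ≠ 0 → D ≤ divk ω) → Module.finrank k ↥V ≤ dimOmega D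
  dimOmega_ex : ∀ D : Point →₀ ℕ, ∃ V : Submodule k Ωk,
    Module.finrank k ↥V = dimOmega D ∧ ∀ ω ∈ V, ω ≠ 0 → D ≤ divk ω
  dimL : (Point →₀ ℕ) → ℕ
  riemann_roch : ∀ D : Point →₀ ℕ, dimL D + g = divDeg D + 1 + dimOmega D
  clifford : ∀ D : Point →₀ ℕ, divDeg D ≤ 2 * g → 2 * dimL D ≤ 2 + divDeg D
  omega_vanish : ∀ D : Point →₀ ℕ, 2 * g - 2 < divDeg D → dimOmega D = 0

variable {K k ΩK Ωk Point : Type*} [Field K] [Field k]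
  [AddCommGroup ΩK] [Module K ΩK] [AddCommGroup Ωk] [Module k Ωk]

/-- `n(Λ, P) = min{ord_P(ω̄) : 0 ≠ ω ∈ Λ}`, the minimal vanishing order at `P` of
the reduction of a nonzero element of `Λ`. -/
noncomputable def nOrd (C : GoodRedDiffData K k ΩK Ωk Point)
    (Λ : Submodule K ΩK) (P : Point) : ℕ :=
  sInf {m : ℕ | ∃ ω ∈ Λ, ω ≠ 0 ∧ (C.divk (C.red ω)) P = m}

/-- `N(Λ) = Σ_P n(Λ, P)` over all closed points of the special fiber. -/
noncomputable def NLambda (C : GoodRedDiffData K k ΩK Ωk Point)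
    (Λ : Submodule K ΩK) : ℕ :=
  ∑ᶠ P : Point, nOrd C Λ P

/-- `f_{C/k}(r) = max{deg D : D ≥ 0 effective with dim Ω(D) ≥ g − r}` on the special
fiber. -/
noncomputable def fCk (C : GoodRedDiffData K k ΩK Ωk Point) (r : ℕ) : ℕ :=
  sSup {d : ℕ | ∃ D : Point →₀ ℕ, divDeg D = d ∧ C.g - r ≤ C.dimOmega D}

/-- for a nonzero subspace `Λ ⊆ Ω(C/K)`,
`N(Λ) ≤ f_{C/k}(codim Λ) ≤ 2·codim Λ`. -/
theorem stmt_15 (C : GoodRedDiffData K k ΩK Ωk Point)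
    (Λ : Submodule K ΩK) (hΛ : Λ ≠ ⊥) :
    NLambda C Λ ≤ fCk C (C.g - Module.finrank K ↥Λ) ∧
      fCk C (C.g - Module.finrank K ↥Λ) ≤ 2 * (C.g - Module.finrank K ↥Λ) := by
  classical
  have hfin : Module.Finite K ΩK :=
    Module.finite_of_finrank_pos (by rw [C.rankK]; exact C.hg)
  have hfink : Module.Finite k Ωk :=
    Module.finite_of_finrank_pos (by rw [C.rankk]; exact C.hg)
  obtain ⟨ω0, hω0Λ, hω0⟩ := Submodule.exists_mem_ne_zero_of_ne_bot hΛ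
  set g := C.g with hgdef
  set s := Module.finrank K ↥Λ with hs
  have hsg : s ≤ g := by
    have := Submodule.finrank_le Λ
    rw [C.rankK] at this; exact this
  have hs1 : 1 ≤ s := by
    have : Nontrivial ↥Λ := ⟨⟨ω0, hω0Λ⟩, 0, by simp [hω0]⟩
    have := Module.finrank_pos (R := K) (M := ↥Λ)
    omega
  -- red 0 = 0
  have hred0 : C.red 0 = 0 := by
    by_contra h
    have h1 := C.red_rank ⊥
    rw [Submodule.bot_coe, Set.image_singleton, finrank_span_singleton h,
      finrank_bot] at h1
    exact one_ne_zero h1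
  -- n(Λ,P) ≤ ord_P (red ω) for nonzero ω ∈ Λ
  have hnle : ∀ ω ∈ Λ, ω ≠ 0 → ∀ P, nOrd C Λ P ≤ C.divk (C.red ω) P := by
    intro ω hω hne P
    exact Nat.sInf_le ⟨ω, hω, hne, rfl⟩
  -- the divisor D with multiplicities n(Λ,P)
  set D : Point →₀ ℕ := Finsupp.onFinset (C.divk (C.red ω0)).support (nOrd C Λ)
    (by
      intro P hP
      rw [Finsupp.mem_support_iff]
      intro h0
      have := hnle ω0 hω0Λ hω0 P
      rw [h0] at this
      omega) with hDdef
  have hDapp : ∀ P, D P = nOrd C Λ P := fun _ => rfl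
  have hNL : NLambda C Λ = divDeg D := by
    have hsupp : Function.support (nOrd C Λ) ⊆ ↑D.support := by
      intro P hP
      simp only [Finset.mem_coe, Finsupp.mem_support_iff, hDapp]
      exact hP
    rw [NLambda, finsum_eq_finset_sum_of_support_subset _ hsupp, divDeg, Finsupp.sum]
    rfl
  -- every nonzero element of span(red '' Λ) vanishes on D
  have key : ∀ ω ∈ Submodule.span k (C.red '' ↑Λ), ω ≠ 0 → ∀ P, D P ≤ C.divk ω P := by
    intro ω hω
    induction hω using Submodule.span_induction with
    | mem x hx =>
      obtain ⟨ω', hω'Λ, rfl⟩ := hx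
      intro hne P
      rcases eq_or_ne ω' 0 with rfl | hω'
      · rw [hred0] at hne; exact absurd rfl hne
      · rw [hDapp]; exact hnle ω' hω'Λ hω' P
    | zero => intro h; exact absurd rfl h
    | add x y hx hy ihx ihy =>
      intro hne P
      rcases eq_or_ne x 0 with rfl | hxne
      · rw [zero_add] at hne ⊢; exact ihy hne P
      rcases eq_or_ne y 0 with rfl | hyne
      · rw [add_zero] at hne ⊢; exact ihx hne P
      have := C.div_add x y hxne hyne hne P
      have h1 := ihx hxne P
      have h2 := ihy hyne P
      omega
    | smul a x hx ih =>
      intro hne P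
      have ha : a ≠ 0 := by rintro rfl; rw [zero_smul] at hne; exact absurd rfl hne
      have hxne : x ≠ 0 := by rintro rfl; rw [smul_zero] at hne; exact absurd rfl hne
      rw [C.div_smul a x ha hxne]
      exact ih hxne P
  -- dimension bound: s ≤ dimOmega D
  have hdim : s ≤ C.dimOmega D := by
    have h1 := C.dimOmega_le D (Submodule.span k (C.red '' ↑Λ)) (by
      intro ω hω hne
      rw [Finsupp.le_def]
      exact key ω hω hne)
    rw [C.red_rank Λ] at h1
    exact h1
  have hgr : g - (g - s) = s := by omega
  have hDmem : divDeg D ∈ {d : ℕ | ∃ D' : Point →₀ ℕ,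
      divDeg D' = d ∧ C.g - (C.g - s) ≤ C.dimOmega D'} := by
    exact ⟨D, rfl, by rw [hgr]; exact hdim⟩
  -- the upper bound on the set
  have hbound : ∀ d ∈ {d : ℕ | ∃ D' : Point →₀ ℕ,
      divDeg D' = d ∧ C.g - (C.g - s) ≤ C.dimOmega D'}, d ≤ 2 * (g - s) := by
    rintro d ⟨D', rfl, hD'⟩
    rw [hgr] at hD'
    have hdeg : divDeg D' ≤ 2 * g - 2 := by
      by_contra h
      have := C.omega_vanish D' (by omega)
      omega
    have hcl := C.clifford D' (by omega)
    have hrr := C.riemann_roch D'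
    omega
  constructor
  · rw [hNL, fCk]
    exact le_csSup ⟨2 * (g - s), hbound⟩ hDmem
  · rw [fCk]
    exact csSup_le ⟨divDeg D, hDmem⟩ hbound
end
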